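/- arXiv:2209.03033 — 2 statements merged into one kernel-verified Lean document; each statement's English description precedes it below -/
import Mathlib

section
/- Assume f : ℝ → ℝ is C¹ with exactly two critical points x_m < x_M (nondegenerate min and max), and consider x' = (f(x) - y)/ε, y' = x + μy + λ with μ ≤ 0. If (x*, y*) is an equilibrium with x* < x_m or x* > x_M that lies on an attracting branch where the slow flow satisfies the sign conditions x' > 0 on S_l = {(x, f(x)) : x < x_m} and x' < 0 on S_r = {(x, f(x)) : x > x_M}, then a contradiction arises; hence every equilibrium satisfies x_m ≤ x* ≤ x_M, i.e. equilibria lie only on the middle branch of the critical manifold. -/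
/-- Lemma 3.2, first part: for εx' = f(x) - y, y' = x + μy + λ with μ ≤ 0,
under the S-shaped-manifold hypotheses (two nondegenerate critical points
x_m < x_M of f) and the slow-flow sign conditions on the outer branches
(x' > 0 on S_l, x' < 0 on S_r), every equilibrium satisfies
x_m ≤ x* ≤ x_M, i.e. equilibria lie only on the middle branch. -/
theorem stmt_13 (f : ℝ → ℝ) (hf : ContDiff ℝ 1 f)
    (xm xM : ℝ) (hmM : xm < xM)
    (hcrit : {x : ℝ | deriv f x = 0} = {xm, xM})
    (hmin : IsLocalMin f xm) (hmax : IsLocalMax f xM)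
    (μ l : ℝ) (hμ : μ ≤ 0)
    (hSl : ∀ x : ℝ, x < xm → (x + μ * f x + l) / deriv f x > 0)
    (hSr : ∀ x : ℝ, x > xM → (x + μ * f x + l) / deriv f x < 0) :
    ∀ xs ys : ℝ, f xs = ys → xs + μ * ys + l = 0 →
      xm ≤ xs ∧ xs ≤ xM := by
  intro xs ys hy heq
  subst hy
  constructor
  · by_contra h
    push_neg at h
    have := hSl xs h
    rw [heq, zero_div] at this
    exact lt_irrefl 0 this
  · by_contra h
    push_neg at h
    have := hSr xs h
    rw [heq, zero_div] at this
    exact lt_irrefl 0 this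
end

section
/- Consider x₁' = (x₂ - x₁)·u, x₂' = (x₁ + 1 - x₂)·v with continuous nonnegative u, v. If u ≡ 0 on [t₀, t₁], then x₁ is constant on [t₀, t₁] and x₂(t) = (x₁(t₀) + 1) + (x₂(t₀) - x₁(t₀) - 1)·exp(-∫_{t₀}^{t} v(s) ds); in particular if ∫_{t₀}^{t₁} v → ∞ then x₂(t₁) → x₁(t₀) + 1, realizing the increment instruction x += 1. -/
open Filter

lemma stmt_19_key (u v x₁ x₂ : ℝ → ℝ) (hv : Continuous v)
    (hx₁ : ∀ t : ℝ, HasDerivAt x₁ ((x₂ t - x₁ t) * u t) t)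
    (hx₂ : ∀ t : ℝ, HasDerivAt x₂ ((x₁ t + 1 - x₂ t) * v t) t)
    (t₀ t₁ : ℝ)
    (huz : ∀ t ∈ Set.Icc t₀ t₁, u t = 0) :
    (∀ t ∈ Set.Icc t₀ t₁, x₁ t = x₁ t₀) ∧
     (∀ t ∈ Set.Icc t₀ t₁,
        x₂ t = (x₁ t₀ + 1) +
          (x₂ t₀ - x₁ t₀ - 1) * Real.exp (-∫ s in t₀..t, v s)) := by
  have hc1 : ∀ t ∈ Set.Icc t₀ t₁, x₁ t = x₁ t₀ := by
    apply constant_of_has_deriv_right_zero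
    · exact fun t _ => (hx₁ t).continuousAt.continuousWithinAt
    · intro x hx
      have h0 : (x₂ x - x₁ x) * u x = 0 := by
        rw [huz x (Set.Ico_subset_Icc_self hx), mul_zero]
      exact h0 ▸ (hx₁ x).hasDerivWithinAt
  refine ⟨hc1, ?_⟩
  set V : ℝ → ℝ := fun t => ∫ s in t₀..t, v s with hVdef
  have hVd : ∀ t : ℝ, HasDerivAt V (v t) t := fun t =>
    intervalIntegral.integral_hasDerivAt_right (hv.intervalIntegrable t₀ t)
      (hv.stronglyMeasurableAtFilter _ _) hv.continuousAt
  set g : ℝ → ℝ := fun t => (x₂ t - x₁ t₀ - 1) * Real.exp (V t) with hgdef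
  have hg : ∀ t ∈ Set.Icc t₀ t₁, g t = g t₀ := by
    apply constant_of_has_deriv_right_zero
    · intro t _
      exact (((hx₂ t).sub_const _).sub_const _ |>.mul ((hVd t).exp)).continuousAt.continuousWithinAt
    · intro x hx
      have hd : HasDerivAt g
          (((x₁ x + 1 - x₂ x) * v x) * Real.exp (V x)
            + (x₂ x - x₁ t₀ - 1) * (Real.exp (V x) * v x)) x :=
        (((hx₂ x).sub_const _).sub_const _).mul ((hVd x).exp)
      have hx1 : x₁ x = x₁ t₀ := hc1 x (Set.Ico_subset_Icc_self hx)
      have : ((x₁ x + 1 - x₂ x) * v x) * Real.exp (V x)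
            + (x₂ x - x₁ t₀ - 1) * (Real.exp (V x) * v x) = 0 := by
        rw [hx1]; ring
      exact this ▸ hd.hasDerivWithinAt
  intro t htmem
  have h1 := hg t htmem
  have hV0 : V t₀ = 0 := by simp [hVdef]
  have : (x₂ t - x₁ t₀ - 1) * Real.exp (V t) = x₂ t₀ - x₁ t₀ - 1 := by
    simpa [hgdef, hV0] using h1
  have hexp : Real.exp (V t) ≠ 0 := Real.exp_ne_zero _
  have := congrArg (fun y => y * Real.exp (-(V t))) this
  simp only [mul_assoc, ← Real.exp_add, add_neg_cancel, Real.exp_zero, mul_one] at this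
  linarith [this]

/-- Counter model with clock U off: for x₁' = (x₂ - x₁)u, x₂' = (x₁+1-x₂)v
with continuous nonnegative u, v, if u ≡ 0 on [t₀,t₁] then x₁ is constant
there and x₂(t) = (x₁(t₀)+1) + (x₂(t₀) - x₁(t₀) - 1)·exp(-∫_{t₀}^t v);
in particular, if u ≡ 0 on [t₀,∞) and ∫_{t₀}^t v → ∞ then
x₂(t) → x₁(t₀) + 1, realizing x += 1. -/
theorem stmt_19 (u v x₁ x₂ : ℝ → ℝ) (hu : Continuous u) (hv : Continuous v)
    (hu0 : ∀ t : ℝ, 0 ≤ u t) (hv0 : ∀ t : ℝ, 0 ≤ v t)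
    (hx₁ : ∀ t : ℝ, HasDerivAt x₁ ((x₂ t - x₁ t) * u t) t)
    (hx₂ : ∀ t : ℝ, HasDerivAt x₂ ((x₁ t + 1 - x₂ t) * v t) t)
    (t₀ t₁ : ℝ) (ht : t₀ ≤ t₁)
    (huz : ∀ t ∈ Set.Icc t₀ t₁, u t = 0) :
    ((∀ t ∈ Set.Icc t₀ t₁, x₁ t = x₁ t₀) ∧
     (∀ t ∈ Set.Icc t₀ t₁,
        x₂ t = (x₁ t₀ + 1) +
          (x₂ t₀ - x₁ t₀ - 1) * Real.exp (-∫ s in t₀..t, v s))) ∧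
    ((∀ t ≥ t₀, u t = 0) →
      Tendsto (fun t => ∫ s in t₀..t, v s) atTop atTop →
      Tendsto x₂ atTop (nhds (x₁ t₀ + 1))) := by
  refine ⟨stmt_19_key u v x₁ x₂ hv hx₁ hx₂ t₀ t₁ huz, ?_⟩
  intro h0 hV
  have hform : ∀ t ≥ t₀, x₂ t = (x₁ t₀ + 1) +
      (x₂ t₀ - x₁ t₀ - 1) * Real.exp (-∫ s in t₀..t, v s) := by
    intro t htt
    exact (stmt_19_key u v x₁ x₂ hv hx₁ hx₂ t₀ t
      (fun s hs => h0 s hs.1)).2 t ⟨htt, le_refl t⟩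
  have hlim : Tendsto (fun t => (x₁ t₀ + 1) +
      (x₂ t₀ - x₁ t₀ - 1) * Real.exp (-∫ s in t₀..t, v s)) atTop (nhds (x₁ t₀ + 1)) := by
    have : Tendsto (fun t => Real.exp (-∫ s in t₀..t, v s)) atTop (nhds 0) :=
      Real.tendsto_exp_atBot.comp (tendsto_neg_atBot_iff.mpr hV)
    have h2 : Tendsto (fun t : ℝ => (x₂ t₀ - x₁ t₀ - 1) * Real.exp (-∫ s in t₀..t, v s))
        atTop (nhds ((x₂ t₀ - x₁ t₀ - 1) * 0)) := tendsto_const_nhds.mul this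
    have h3 : Tendsto (fun t : ℝ => (x₁ t₀ + 1) +
        (x₂ t₀ - x₁ t₀ - 1) * Real.exp (-∫ s in t₀..t, v s))
        atTop (nhds ((x₁ t₀ + 1) + (x₂ t₀ - x₁ t₀ - 1) * 0)) := tendsto_const_nhds.add h2
    simpa using h3
  exact hlim.congr' (Filter.eventually_atTop.mpr ⟨t₀, fun t htt => (hform t htt).symm⟩)
end
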